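/- Let λ be real and let (a_{n,k}(λ)) be defined by a_{n,0}(λ) = a_n for a given sequence (a_n), and a_{n,k}(λ) = (1-(k-n)λ) a_{n,k-1}(λ) + a_{n+1,k-1}(λ) for n ≥ 0, k ≥ 1. Then for all integers 0 ≤ l ≤ n, a_{1,n}(λ) = ∑_{k=0}^{l} C(l,k) (1-(n-l)λ)_{l-k,λ} a_{k+1,n-l}(λ). -/

import Mathlib

open Finset

/-- Generalized falling factorial `(x)_{n,lam} = x(x-lam)...(x-(n-1)lam)`. -/
noncomputable def dfall (lam x : ℝ) (n : ℕ) : ℝ := ∏ i ∈ Finset.range n, (x - i * lam)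

/-- Generalized rising factorial `⟨x⟩_{n,lam} = x(x+lam)...(x+(n-1)lam)`. -/
noncomputable def drise (lam x : ℝ) (n : ℕ) : ℝ := ∏ i ∈ Finset.range n, (x + i * lam)

lemma dfall_zero (lam x : ℝ) : dfall lam x 0 = 1 := by simp [dfall]

lemma dfall_succ (lam x : ℝ) (n : ℕ) :
    dfall lam x (n + 1) = dfall lam x n * (x - n * lam) := by
  simp [dfall, Finset.prod_range_succ]

lemma dfall_succ_left (lam x : ℝ) (n : ℕ) :
    dfall lam (x + lam) (n + 1) = (x + lam) * dfall lam x n := by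
  unfold dfall
  rw [Finset.prod_range_succ', mul_comm]
  congr 1
  · push_cast; ring
  · apply Finset.prod_congr rfl
    intro i _
    push_cast; ring

lemma choose_id (l k : ℕ) (hk : k + 1 ≤ l) (x lam : ℝ) :
    (((l+1).choose (k+1) : ℕ) : ℝ) * (x + lam)
      = ((l.choose (k+1) : ℕ) : ℝ) * (x + (((k:ℝ)+1)+1)*lam)
        + ((l.choose k : ℕ) : ℝ) * (x - (((l:ℝ)-(k:ℝ)-1))*lam) := by
  have hk' : k ≤ l := Nat.le_of_succ_le hk
  have h1 : (((l+1).choose (k+1) : ℕ) : ℝ) = l.choose (k+1) + l.choose k := by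
    rw [Nat.choose_succ_succ]; push_cast; ring
  have h2 : ((l.choose (k+1) : ℕ) : ℝ) * ((k:ℝ)+1) = ((l.choose k : ℕ) : ℝ) * ((l:ℝ) - k) := by
    have h := Nat.choose_succ_right_eq l k
    have : ((l.choose (k+1) * (k+1) : ℕ) : ℝ) = ((l.choose k * (l - k) : ℕ) : ℝ) := by
      exact_mod_cast congrArg (Nat.cast : ℕ → ℝ) h
    push_cast [Nat.cast_sub hk'] at this
    linarith [this]
  rw [h1]
  linear_combination (-lam) * h2

theorem stmt3 (lam : ℝ) (a : ℕ → ℝ) (A : ℕ → ℕ → ℝ)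
    (hA0 : ∀ n : ℕ, A n 0 = a n)
    (hA : ∀ n k : ℕ, A n (k + 1) = (1 - ((k + 1 : ℝ) - (n : ℝ)) * lam) * A n k + A (n + 1) k)
    (l n : ℕ) (hln : l ≤ n) :
    A 1 n = ∑ k ∈ Finset.range (l + 1),
      (l.choose k : ℝ) * dfall lam (1 - ((n : ℝ) - (l : ℝ)) * lam) (l - k) * A (k + 1) (n - l) := by
  induction l with
  | zero => simp [dfall]
  | succ l ih =>
    have hl : l ≤ n := Nat.le_of_succ_le hln
    set x : ℝ := 1 - ((n : ℝ) - (l : ℝ)) * lam with hxdef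
    set m : ℕ := n - (l + 1) with hmdef
    have hm : n - l = m + 1 := by omega
    have hmc : (m : ℝ) = (n : ℝ) - (l : ℝ) - 1 := by
      rw [hmdef, Nat.cast_sub hln]; push_cast; ring
    have hX : (1 : ℝ) - ((n : ℝ) - ((l + 1 : ℕ) : ℝ)) * lam = x + lam := by
      push_cast; rw [hxdef]; ring
    rw [ih hl, hm]
    symm
    have key : ∀ k ∈ Finset.range (l + 2),
        (((l+1).choose k : ℕ) : ℝ) * dfall lam (x + lam) (l + 1 - k) * A (k+1) m
          = ((l.choose k : ℕ) : ℝ) * dfall lam x (l - k) * (x + ((k:ℝ)+1)*lam) * A (k+1) m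
            + (if k = 0 then 0 else
                ((l.choose (k-1) : ℕ) : ℝ) * dfall lam x (l + 1 - k) * A (k+1) m) := by
      intro k hk
      rw [Finset.mem_range] at hk
      match k with
      | 0 =>
        simp only [if_pos rfl, Nat.choose_zero_right, Nat.sub_zero, Nat.cast_one, add_zero]
        rw [dfall_succ_left]
        push_cast; ring
      | (j+1) =>
        rcases Nat.lt_or_ge j l with hj | hj
        · -- j + 1 ≤ l
          have hj1 : j + 1 ≤ l := hj
          have hp1 : l + 1 - (j + 1) = (l - (j + 1)) + 1 := by omega
          have hp2 : l - j = (l - (j + 1)) + 1 := by omega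
          set p : ℕ := l - (j + 1) with hpdef
          have hpc : (p : ℝ) = (l : ℝ) - (j : ℝ) - 1 := by
            rw [hpdef, Nat.cast_sub hj1]; push_cast; ring
          rw [hp1, dfall_succ_left, dfall_succ]
          simp only [if_neg (Nat.succ_ne_zero j), Nat.succ_sub_one]
          have hc := choose_id l j hj1 x lam
          rw [hpc]
          push_cast
          linear_combination (dfall lam x p * A (j + 1 + 1) m) * hc
        · -- j ≥ l, so j = l (since j + 1 < l + 2)
          have hj' : j = l := by omega
          rw [hj']
          have h1 : l + 1 - (l + 1) = 0 := by omega
          have h2 : l - (l + 1) = 0 := by omega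
          rw [h1, h2]
          simp only [if_neg (Nat.succ_ne_zero l), Nat.succ_sub_one, Nat.choose_self,
            Nat.choose_succ_self, dfall_zero, Nat.cast_zero, Nat.cast_one]
          ring
    rw [hX, show l + 1 + 1 = l + 2 from rfl]
    rw [Finset.sum_congr rfl key, Finset.sum_add_distrib]
    have hU : ∑ k ∈ Finset.range (l + 2),
        ((l.choose k : ℕ) : ℝ) * dfall lam x (l - k) * (x + ((k:ℝ)+1)*lam) * A (k+1) m
      = ∑ k ∈ Finset.range (l + 1),
        ((l.choose k : ℕ) : ℝ) * dfall lam x (l - k) * (x + ((k:ℝ)+1)*lam) * A (k+1) m := by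
      rw [Finset.sum_range_succ, Nat.choose_succ_self]
      simp
    have hV : ∑ k ∈ Finset.range (l + 2),
        (if k = 0 then (0:ℝ) else
          ((l.choose (k-1) : ℕ) : ℝ) * dfall lam x (l + 1 - k) * A (k+1) m)
      = ∑ k ∈ Finset.range (l + 1),
        ((l.choose k : ℕ) : ℝ) * dfall lam x (l - k) * A (k+2) m := by
      rw [Finset.sum_range_succ']
      simp only [Nat.succ_ne_zero, if_false, eq_self_iff_true, if_true, add_zero,
        Nat.succ_sub_one, ite_false, ite_true]
      apply Finset.sum_congr rfl
      intro k _
      have : l + 1 - (k + 1) = l - k := by omega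
      rw [this]
    rw [hU, hV, ← Finset.sum_add_distrib]
    apply Finset.sum_congr rfl
    intro k hk
    rw [Finset.mem_range] at hk
    rw [hA (k+1) m]
    have hco : (1 : ℝ) - (((m:ℝ) + 1) - ((k+1:ℕ) : ℝ)) * lam = x + ((k:ℝ)+1)*lam := by
      rw [hmc, hxdef]; push_cast; ring
    rw [hco]
    ring
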